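/- Let F be a field, n a positive integer, and L = {(i₁, j₁)} a 1-step ladder on n with i₁ ≥ j₁. Set n₁ = j₁ - 1, n₂ = i₁ - j₁ + 1, n₃ = n - i₁. Then M_L decomposes as an internal direct sum M_L = h ⊕ l ⊕ r ⊕ a, where h = span{ e_{i,j} : n₁ < i ≤ n₁+n₂, n₁ < j ≤ n₁+n₂ }, l = span{ e_{i,j} : 1 ≤ i ≤ n₁, n₁ < j ≤ n₁+n₂ }, r = span{ e_{i,j} : n₁ < i ≤ n₁+n₂, n₁+n₂ < j ≤ n }, a = span{ e_{i,j} : 1 ≤ i ≤ n₁, n₁+n₂ < j ≤ n }, and the commutator bracket satisfies the containments [h,h] ⊆ h, [h,l] ⊆ l, [h,r] ⊆ r, [l,r] ⊆ a, [l,l] = 0, [r,r] = 0, [a, M_L] = 0, and [h,a] = 0. -/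

import Mathlib

/-!
A matrix lies in the span of the matrix units `e_{ij}` with `(i, j)` in an index set `P` exactly
when its support lies in `P`. Since `e_{ik} e_{k'j} = δ_{kk'} e_{ij}`, a product of two such
spans is supported in the relational composition of their index sets, and spans over disjoint
index sets are independent. For the four blocks, which are rectangles of indices, every claim
thereby reduces to linear arithmetic on the endpoints of the rectangles.
-/

open Matrix

/-- The ladder matrices on the 1-step ladder `L = {(i₁, j₁)}` on `n`:
the span of the matrix units `e_{i,j}` (1-based) with `1 ≤ i ≤ i₁` and `j₁ ≤ j ≤ n`. -/
def ladderModule (F : Type*) [Field F] (n i₁ j₁ : ℕ) :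
    Submodule F (Matrix (Fin n) (Fin n) F) :=
  Submodule.span F
    { A | ∃ i j : Fin n, (i : ℕ) + 1 ≤ i₁ ∧ j₁ ≤ (j : ℕ) + 1 ∧
      A = Matrix.single i j 1 }

/-- The span of the matrix units `e_{i,j}` (0-based indices) with
`r₁ ≤ i < r₂` and `c₁ ≤ j < c₂`. -/
def blockSpan (F : Type*) [Field F] (n r₁ r₂ c₁ c₂ : ℕ) :
    Submodule F (Matrix (Fin n) (Fin n) F) :=
  Submodule.span F
    { A | ∃ i j : Fin n, r₁ ≤ (i : ℕ) ∧ (i : ℕ) < r₂ ∧ c₁ ≤ (j : ℕ) ∧ (j : ℕ) < c₂ ∧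
      A = Matrix.single i j 1 }

theorem Submodule.eq_zero_and_eq_zero_of_add_eq_zero {R M : Type*} [Ring R]
    [AddCommGroup M] [Module R M] {U V : Submodule R M} (hUV : Disjoint U V) {x y : M}
    (hx : x ∈ U) (hy : y ∈ V) (h : x + y = 0) : x = 0 ∧ y = 0 := by
  have hy0 : y = 0 :=
    Submodule.disjoint_def.1 hUV y (eq_neg_of_add_eq_zero_right h ▸ U.neg_mem hx) hy
  exact ⟨by simpa [hy0] using h, hy0⟩

section MatrixUnitSpan

variable (R : Type*) {l m n : Type*} [DecidableEq l] [DecidableEq m] [DecidableEq n]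

def matrixUnitSpan [Semiring R] (P : m → n → Prop) : Submodule R (Matrix m n R) :=
  Submodule.span R {A | ∃ i j, P i j ∧ A = single i j 1}

variable {R}

theorem mem_matrixUnitSpan_iff [Semiring R] [Fintype m] [Fintype n] {P : m → n → Prop}
    {A : Matrix m n R} : A ∈ matrixUnitSpan R P ↔ ∀ i j, A i j ≠ 0 → P i j := by
  constructor
  · intro hA
    induction hA using Submodule.span_induction with
    | mem B hB =>
      obtain ⟨i, j, hP, rfl⟩ := hB
      intro a b hab
      obtain ⟨rfl, rfl⟩ : i = a ∧ j = b := by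
        by_contra h
        exact hab (single_apply_of_ne _ _ _ _ _ h)
      exact hP
    | zero => simp
    | add x y _ _ hx hy =>
      intro a b hab
      by_cases hxab : x a b = 0
      · exact hy a b (by simpa [hxab] using hab)
      · exact hx a b hxab
    | smul c x _ hx =>
      exact fun a b hab => hx a b (right_ne_zero_of_mul hab)
  · intro hA
    rw [matrix_eq_sum_single A]
    refine Submodule.sum_mem _ fun i _ => Submodule.sum_mem _ fun j _ => ?_
    by_cases hij : A i j = 0
    · simp [hij]
    · rw [← mul_one (A i j), ← smul_eq_mul, ← smul_single]
      exact Submodule.smul_mem _ _ (Submodule.subset_span ⟨i, j, hA i j hij, rfl⟩)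

theorem matrixUnitSpan_mono [Semiring R] {P Q : m → n → Prop} (h : ∀ i j, P i j → Q i j) :
    matrixUnitSpan R P ≤ matrixUnitSpan R Q :=
  Submodule.span_mono fun _ ⟨i, j, hP, hA⟩ => ⟨i, j, h i j hP, hA⟩

theorem matrixUnitSpan_sup [Semiring R] (P Q : m → n → Prop) :
    matrixUnitSpan R P ⊔ matrixUnitSpan R Q = matrixUnitSpan R (fun i j => P i j ∨ Q i j) := by
  rw [matrixUnitSpan, matrixUnitSpan, matrixUnitSpan, ← Submodule.span_union]
  congr 1
  ext A
  simp only [Set.mem_union, Set.mem_ofPred_eq, or_and_right, exists_or]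

theorem add_mem_matrixUnitSpan_or [Semiring R] {P Q : m → n → Prop} {x y : Matrix m n R}
    (hx : x ∈ matrixUnitSpan R P) (hy : y ∈ matrixUnitSpan R Q) :
    x + y ∈ matrixUnitSpan R (fun i j => P i j ∨ Q i j) :=
  matrixUnitSpan_sup (R := R) P Q ▸ Submodule.add_mem_sup hx hy

theorem disjoint_matrixUnitSpan [Semiring R] [Fintype m] [Fintype n] {P Q : m → n → Prop}
    (h : ∀ i j, P i j → Q i j → False) : Disjoint (matrixUnitSpan R P) (matrixUnitSpan R Q) := by
  refine Submodule.disjoint_def.2 fun A hP hQ => ?_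
  rw [mem_matrixUnitSpan_iff] at hP hQ
  ext i j
  by_contra hA
  exact h i j (hP i j hA) (hQ i j hA)

theorem mul_mem_matrixUnitSpan [Semiring R] [Fintype l] [Fintype m] [Fintype n]
    {P : l → m → Prop} {Q : m → n → Prop} {x : Matrix l m R} {y : Matrix m n R}
    (hx : x ∈ matrixUnitSpan R P) (hy : y ∈ matrixUnitSpan R Q) :
    x * y ∈ matrixUnitSpan R (fun i j => ∃ k, P i k ∧ Q k j) := by
  rw [mem_matrixUnitSpan_iff] at hx hy ⊢
  intro i j hxy
  obtain ⟨k, -, hk⟩ := Finset.exists_ne_zero_of_sum_ne_zero hxy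
  exact ⟨k, hx i k (left_ne_zero_of_mul hk), hy k j (right_ne_zero_of_mul hk)⟩

theorem commutator_mem_matrixUnitSpan [Ring R] [Fintype n] {P Q T : n → n → Prop}
    (hT : ∀ i k j, P i k ∧ Q k j ∨ Q i k ∧ P k j → T i j) {x y : Matrix n n R}
    (hx : x ∈ matrixUnitSpan R P) (hy : y ∈ matrixUnitSpan R Q) :
    x * y - y * x ∈ matrixUnitSpan R T := by
  have h := Submodule.sub_mem_sup (mul_mem_matrixUnitSpan hx hy) (mul_mem_matrixUnitSpan hy hx)
  rw [matrixUnitSpan_sup] at h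
  refine matrixUnitSpan_mono ?_ h
  rintro i j (⟨k, hk⟩ | ⟨k, hk⟩)
  · exact hT i k j (Or.inl hk)
  · exact hT i k j (Or.inr hk)

theorem commutator_eq_zero_of_mem_matrixUnitSpan [Ring R] [Fintype n] {P Q : n → n → Prop}
    (hPQ : ∀ i k j, P i k ∧ Q k j ∨ Q i k ∧ P k j → False) {x y : Matrix n n R}
    (hx : x ∈ matrixUnitSpan R P) (hy : y ∈ matrixUnitSpan R Q) : x * y - y * x = 0 := by
  have h := commutator_mem_matrixUnitSpan (T := fun _ _ => False) hPQ hx hy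
  rw [mem_matrixUnitSpan_iff] at h
  ext i j
  by_contra hij
  exact h i j hij

end MatrixUnitSpan

theorem blockSpan_eq_matrixUnitSpan (F : Type*) [Field F] (n r₁ r₂ c₁ c₂ : ℕ) :
    blockSpan F n r₁ r₂ c₁ c₂ = matrixUnitSpan F fun (i j : Fin n) =>
      r₁ ≤ (i : ℕ) ∧ (i : ℕ) < r₂ ∧ c₁ ≤ (j : ℕ) ∧ (j : ℕ) < c₂ := by
  simp only [blockSpan, matrixUnitSpan, and_assoc]

theorem ladderModule_eq_matrixUnitSpan (F : Type*) [Field F] (n i₁ j₁ : ℕ) :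
    ladderModule F n i₁ j₁ = matrixUnitSpan F fun (i j : Fin n) =>
      (i : ℕ) + 1 ≤ i₁ ∧ j₁ ≤ (j : ℕ) + 1 := by
  simp only [ladderModule, matrixUnitSpan, and_assoc]

theorem ladderModule_block_decomposition_general
    (F : Type*) [Field F] (n i₁ j₁ : ℕ) (n₁ n₂ : ℕ) (hn₁ : n₁ + 1 = j₁) (hn₂' : n₂ + j₁ = i₁ + 1) :
    (blockSpan F n n₁ (n₁ + n₂) n₁ (n₁ + n₂)
        ⊔ blockSpan F n 0 n₁ n₁ (n₁ + n₂)
        ⊔ blockSpan F n n₁ (n₁ + n₂) (n₁ + n₂) n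
        ⊔ blockSpan F n 0 n₁ (n₁ + n₂) n
      = ladderModule F n i₁ j₁)
    ∧ (∀ xh ∈ blockSpan F n n₁ (n₁ + n₂) n₁ (n₁ + n₂),
        ∀ xl ∈ blockSpan F n 0 n₁ n₁ (n₁ + n₂),
          ∀ xr ∈ blockSpan F n n₁ (n₁ + n₂) (n₁ + n₂) n,
            ∀ xa ∈ blockSpan F n 0 n₁ (n₁ + n₂) n,
              xh + xl + xr + xa = 0 → xh = 0 ∧ xl = 0 ∧ xr = 0 ∧ xa = 0)
    ∧ (∀ x ∈ blockSpan F n n₁ (n₁ + n₂) n₁ (n₁ + n₂),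
        ∀ y ∈ blockSpan F n n₁ (n₁ + n₂) n₁ (n₁ + n₂),
          x * y - y * x ∈ blockSpan F n n₁ (n₁ + n₂) n₁ (n₁ + n₂))
    ∧ (∀ x ∈ blockSpan F n n₁ (n₁ + n₂) n₁ (n₁ + n₂),
        ∀ y ∈ blockSpan F n 0 n₁ n₁ (n₁ + n₂),
          x * y - y * x ∈ blockSpan F n 0 n₁ n₁ (n₁ + n₂))
    ∧ (∀ x ∈ blockSpan F n n₁ (n₁ + n₂) n₁ (n₁ + n₂),
        ∀ y ∈ blockSpan F n n₁ (n₁ + n₂) (n₁ + n₂) n,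
          x * y - y * x ∈ blockSpan F n n₁ (n₁ + n₂) (n₁ + n₂) n)
    ∧ (∀ x ∈ blockSpan F n 0 n₁ n₁ (n₁ + n₂),
        ∀ y ∈ blockSpan F n n₁ (n₁ + n₂) (n₁ + n₂) n,
          x * y - y * x ∈ blockSpan F n 0 n₁ (n₁ + n₂) n)
    ∧ (∀ x ∈ blockSpan F n 0 n₁ n₁ (n₁ + n₂),
        ∀ y ∈ blockSpan F n 0 n₁ n₁ (n₁ + n₂), x * y - y * x = 0)
    ∧ (∀ x ∈ blockSpan F n n₁ (n₁ + n₂) (n₁ + n₂) n,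
        ∀ y ∈ blockSpan F n n₁ (n₁ + n₂) (n₁ + n₂) n, x * y - y * x = 0)
    ∧ (∀ x ∈ blockSpan F n 0 n₁ (n₁ + n₂) n,
        ∀ y ∈ ladderModule F n i₁ j₁, x * y - y * x = 0)
    ∧ (∀ x ∈ blockSpan F n n₁ (n₁ + n₂) n₁ (n₁ + n₂),
        ∀ y ∈ blockSpan F n 0 n₁ (n₁ + n₂) n, x * y - y * x = 0) := by
  obtain rfl : i₁ = n₁ + n₂ := by omega
  subst hn₁
  simp only [blockSpan_eq_matrixUnitSpan, ladderModule_eq_matrixUnitSpan]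
  refine ⟨?sum, ?independent, ?_, ?_, ?_, ?_, ?_, ?_, ?_, ?_⟩
  case sum =>
    simp only [matrixUnitSpan_sup]
    congr
    ext i j
    omega
  case independent =>
    intro xh hh xl hl xr hr xa ha hsum
    obtain ⟨hhlr, rfl⟩ := Submodule.eq_zero_and_eq_zero_of_add_eq_zero
      (disjoint_matrixUnitSpan fun _ _ _ _ => by omega)
      (add_mem_matrixUnitSpan_or (add_mem_matrixUnitSpan_or hh hl) hr) ha hsum
    obtain ⟨hhl, rfl⟩ := Submodule.eq_zero_and_eq_zero_of_add_eq_zero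
      (disjoint_matrixUnitSpan fun _ _ _ _ => by omega) (add_mem_matrixUnitSpan_or hh hl) hr hhlr
    obtain ⟨rfl, rfl⟩ := Submodule.eq_zero_and_eq_zero_of_add_eq_zero
      (disjoint_matrixUnitSpan fun _ _ _ _ => by omega) hh hl hhl
    exact ⟨rfl, rfl, rfl, rfl⟩
  all_goals first
    | exact fun x hx y hy => commutator_mem_matrixUnitSpan (fun _ _ _ _ => by omega) hx hy
    | exact fun x hx y hy =>
        commutator_eq_zero_of_mem_matrixUnitSpan (fun _ _ _ _ => by omega) hx hy

/-- For a one-step ladder with `i₁ ≥ j₁`, with `n₁ = j₁ - 1`, `n₂ = i₁ - j₁ + 1`,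
`n₃ = n - i₁`, the ladder matrix Lie algebra decomposes as the internal direct sum
`M_L = h ⊕ l ⊕ r ⊕ a` of the four blocks, and the commutator bracket satisfies
`[h,h] ⊆ h`, `[h,l] ⊆ l`, `[h,r] ⊆ r`, `[l,r] ⊆ a`, `[l,l] = 0`, `[r,r] = 0`,
`[a, M_L] = 0` and `[h,a] = 0`. -/
theorem ladderModule_block_decomposition
    (F : Type*) [Field F] (n i₁ j₁ : ℕ) (hn : 1 ≤ n)
    (hi₁ : 1 ≤ i₁) (hi₁n : i₁ ≤ n) (hj₁ : 1 ≤ j₁) (hj₁n : j₁ ≤ n) (hij : j₁ ≤ i₁)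
    (n₁ n₂ n₃ : ℕ) (hn₁ : n₁ + 1 = j₁) (hn₂' : n₂ + j₁ = i₁ + 1) (hn₃ : n₃ + i₁ = n) :
    (blockSpan F n n₁ (n₁ + n₂) n₁ (n₁ + n₂)
        ⊔ blockSpan F n 0 n₁ n₁ (n₁ + n₂)
        ⊔ blockSpan F n n₁ (n₁ + n₂) (n₁ + n₂) n
        ⊔ blockSpan F n 0 n₁ (n₁ + n₂) n
      = ladderModule F n i₁ j₁)
    ∧ (∀ xh ∈ blockSpan F n n₁ (n₁ + n₂) n₁ (n₁ + n₂),
        ∀ xl ∈ blockSpan F n 0 n₁ n₁ (n₁ + n₂),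
          ∀ xr ∈ blockSpan F n n₁ (n₁ + n₂) (n₁ + n₂) n,
            ∀ xa ∈ blockSpan F n 0 n₁ (n₁ + n₂) n,
              xh + xl + xr + xa = 0 → xh = 0 ∧ xl = 0 ∧ xr = 0 ∧ xa = 0)
    ∧ (∀ x ∈ blockSpan F n n₁ (n₁ + n₂) n₁ (n₁ + n₂),
        ∀ y ∈ blockSpan F n n₁ (n₁ + n₂) n₁ (n₁ + n₂),
          x * y - y * x ∈ blockSpan F n n₁ (n₁ + n₂) n₁ (n₁ + n₂))
    ∧ (∀ x ∈ blockSpan F n n₁ (n₁ + n₂) n₁ (n₁ + n₂),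
        ∀ y ∈ blockSpan F n 0 n₁ n₁ (n₁ + n₂),
          x * y - y * x ∈ blockSpan F n 0 n₁ n₁ (n₁ + n₂))
    ∧ (∀ x ∈ blockSpan F n n₁ (n₁ + n₂) n₁ (n₁ + n₂),
        ∀ y ∈ blockSpan F n n₁ (n₁ + n₂) (n₁ + n₂) n,
          x * y - y * x ∈ blockSpan F n n₁ (n₁ + n₂) (n₁ + n₂) n)
    ∧ (∀ x ∈ blockSpan F n 0 n₁ n₁ (n₁ + n₂),
        ∀ y ∈ blockSpan F n n₁ (n₁ + n₂) (n₁ + n₂) n,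
          x * y - y * x ∈ blockSpan F n 0 n₁ (n₁ + n₂) n)
    ∧ (∀ x ∈ blockSpan F n 0 n₁ n₁ (n₁ + n₂),
        ∀ y ∈ blockSpan F n 0 n₁ n₁ (n₁ + n₂), x * y - y * x = 0)
    ∧ (∀ x ∈ blockSpan F n n₁ (n₁ + n₂) (n₁ + n₂) n,
        ∀ y ∈ blockSpan F n n₁ (n₁ + n₂) (n₁ + n₂) n, x * y - y * x = 0)
    ∧ (∀ x ∈ blockSpan F n 0 n₁ (n₁ + n₂) n,
        ∀ y ∈ ladderModule F n i₁ j₁, x * y - y * x = 0)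
    ∧ (∀ x ∈ blockSpan F n n₁ (n₁ + n₂) n₁ (n₁ + n₂),
        ∀ y ∈ blockSpan F n 0 n₁ (n₁ + n₂) n, x * y - y * x = 0) :=
  ladderModule_block_decomposition_general F n i₁ j₁ n₁ n₂ hn₁ hn₂'
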